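/- (Expansion of the divided-power c-monomials, used in the proof of Proposition 4.3 of the paper.) For every finite multiset μ of positive integers, one has the operator identities on P ⊗_F P: c*_μ = ∑_{σ ⊆ μ} (−1)^{ℓ(σ)} q^{−|μ| + |σ|} · a*_{μ∖σ} ⊗ a*_σ and c_μ = ∑_{σ ⊆ μ} (−1)^{ℓ(σ)} q^{−|μ| + |σ|} · a_{μ∖σ} ⊗ a_σ, where the sums run over all submultisets σ of μ. -/

import Mathlib

open MvPolynomial

noncomputable section

set_option linter.unusedSectionVars false

variable (F : Type*) [Field F] [CharZero F]

abbrev PP (F : Type*) [Field F] : Type _ := MvPolynomial ℕ+ F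

/-- `a_{-r}`: multiplication by `X r`. -/
def aNeg (r : ℕ+) : Module.End F (PP F) := LinearMap.mulLeft F (X r)

/-- `a_r := κ'_r • ∂/∂X_r`. -/
def aPos (κ : ℕ+ → F) (r : ℕ+) : Module.End F (PP F) :=
  κ r • ((pderiv r : Derivation F (PP F) (PP F)) : Module.End F (PP F))

lemma aNeg_commute (i j : ℕ+) : Commute (aNeg F i) (aNeg F j) := by
  apply LinearMap.ext
  intro p
  simp [aNeg, Module.End.mul_apply, mul_left_comm]

lemma pderiv_commute (i j : ℕ+) :
    Commute ((pderiv i : Derivation F (PP F) (PP F)) : Module.End F (PP F))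
      ((pderiv j : Derivation F (PP F) (PP F)) : Module.End F (PP F)) := by
  have h : (⁅(pderiv i : Derivation F (PP F) (PP F)),
      (pderiv j : Derivation F (PP F) (PP F))⁆ : Derivation F (PP F) (PP F)) = 0 := by
    apply derivation_ext
    intro k
    simp only [Derivation.commutator_apply, pderiv_X, Pi.single_apply, Derivation.zero_apply]
    split_ifs <;> simp
  have h2 : (⁅((pderiv i : Derivation F (PP F) (PP F)) : Module.End F (PP F)),
      ((pderiv j : Derivation F (PP F) (PP F)) : Module.End F (PP F))⁆ : Module.End F (PP F)) = 0 := by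
    rw [← Derivation.commutator_coe_linear_map, h]
    rfl
  rw [Ring.lie_def] at h2
  exact sub_eq_zero.mp h2

lemma aPos_commute (κ : ℕ+ → F) (i j : ℕ+) : Commute (aPos F κ i) (aPos F κ j) :=
  ((pderiv_commute F i j).smul_left (κ i)).smul_right (κ j)

/-- Product of a pairwise-commuting family of operators over a multiset. -/
def opProd {M : Type*} [Monoid M] (f : ℕ+ → M) (hf : ∀ i j, Commute (f i) (f j))
    (μ : Multiset ℕ+) : M :=
  (μ.map f).noncommProd (by
    intro x hx y hy _
    obtain ⟨i, _, rfl⟩ := Multiset.mem_map.mp hx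
    obtain ⟨j, _, rfl⟩ := Multiset.mem_map.mp hy
    exact hf i j)

/-- `m(μ)! := ∏_r m_r(μ)!`, the product of factorials of part multiplicities. -/
def mfact (μ : Multiset ℕ+) : ℕ := (μ.dedup.map fun r => (μ.count r).factorial).prod

/-- `|μ|`: the weight (sum of the parts) of `μ`. -/
def msum (μ : Multiset ℕ+) : ℕ := (μ.map fun r => (r : ℕ)).sum

/-- The multiset binomial coefficient `[μ ⫶ ν]`. -/
def mbinom (μ ν : Multiset ℕ+) : F :=
  if ν ≤ μ then (mfact μ : F) / ((mfact (μ - ν) : F) * (mfact ν : F)) else 0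

/-- `a*_μ := (1/m(μ)!) ∏_{r∈μ} a_{-r}`. -/
def aStar (μ : Multiset ℕ+) : Module.End F (PP F) :=
  ((mfact μ : F))⁻¹ • opProd (aNeg F) (aNeg_commute F) μ

/-- `a_μ := (1/m(μ)!) ∏_{r∈μ} a_r`. -/
def aLow (κ : ℕ+ → F) (μ : Multiset ℕ+) : Module.End F (PP F) :=
  ((mfact μ : F))⁻¹ • opProd (aPos F κ) (aPos_commute F κ) μ

/-- `ξ_λ := (1/m(λ)!) ∏_{r∈λ} κ'_r`. -/
def xiCoef (κ : ℕ+ → F) (lam : Multiset ℕ+) : F :=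
  ((mfact lam : F))⁻¹ * (lam.map κ).prod

open scoped TensorProduct

/-- `f ⊗ id` acting on `P ⊗ P`. -/
def op1 (f : Module.End F (PP F)) : Module.End F (PP F ⊗[F] PP F) :=
  TensorProduct.map f LinearMap.id

/-- `id ⊗ g` acting on `P ⊗ P`. -/
def op2 (g : Module.End F (PP F)) : Module.End F (PP F ⊗[F] PP F) :=
  TensorProduct.map LinearMap.id g

lemma op1_mul (f f' : Module.End F (PP F)) : op1 F (f * f') = op1 F f * op1 F f' := by
  simp only [op1, Module.End.mul_eq_comp, ← TensorProduct.map_comp, LinearMap.comp_id]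

lemma op2_mul (g g' : Module.End F (PP F)) : op2 F (g * g') = op2 F g * op2 F g' := by
  simp only [op2, Module.End.mul_eq_comp, ← TensorProduct.map_comp, LinearMap.comp_id]

lemma op1_op2_commute (f g : Module.End F (PP F)) : Commute (op1 F f) (op2 F g) := by
  unfold op1 op2
  rw [Commute, SemiconjBy, Module.End.mul_eq_comp, Module.End.mul_eq_comp,
    ← TensorProduct.map_comp, ← TensorProduct.map_comp]
  simp

lemma op1_commute {f f' : Module.End F (PP F)} (h : Commute f f') :
    Commute (op1 F f) (op1 F f') := by
  rw [Commute, SemiconjBy, ← op1_mul, ← op1_mul, h.eq]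

lemma op2_commute {g g' : Module.End F (PP F)} (h : Commute g g') :
    Commute (op2 F g) (op2 F g') := by
  rw [Commute, SemiconjBy, ← op2_mul, ← op2_mul, h.eq]

variable (q : F)

/-- `b_r := a_r ⊗ id + q^{-r} (id ⊗ a_r)`. -/
def bPos (κ : ℕ+ → F) (r : ℕ+) : Module.End F (PP F ⊗[F] PP F) :=
  op1 F (aPos F κ r) + (q⁻¹) ^ (r : ℕ) • op2 F (aPos F κ r)

/-- `b_{-r} := a_{-r} ⊗ id + q^{-r} (id ⊗ a_{-r})`. -/
def bNeg (r : ℕ+) : Module.End F (PP F ⊗[F] PP F) :=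
  op1 F (aNeg F r) + (q⁻¹) ^ (r : ℕ) • op2 F (aNeg F r)

/-- `c_r := q^{-r} (a_r ⊗ id) - id ⊗ a_r`. -/
def cPos (κ : ℕ+ → F) (r : ℕ+) : Module.End F (PP F ⊗[F] PP F) :=
  (q⁻¹) ^ (r : ℕ) • op1 F (aPos F κ r) - op2 F (aPos F κ r)

/-- `c_{-r} := q^{-r} (a_{-r} ⊗ id) - id ⊗ a_{-r}`. -/
def cNeg (r : ℕ+) : Module.End F (PP F ⊗[F] PP F) :=
  (q⁻¹) ^ (r : ℕ) • op1 F (aNeg F r) - op2 F (aNeg F r)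

lemma commute_aux {A B C D : Module.End F (PP F ⊗[F] PP F)} {x y : F}
    (hAC : Commute A C) (hAD : Commute A D) (hBC : Commute B C) (hBD : Commute B D) :
    Commute (x • A - B) (y • C - D) := by
  have eAC := LinearMap.congr_fun hAC.eq
  have eAD := LinearMap.congr_fun hAD.eq
  have eBC := LinearMap.congr_fun hBC.eq
  have eBD := LinearMap.congr_fun hBD.eq
  simp only [Module.End.mul_apply] at eAC eAD eBC eBD
  rw [Commute, SemiconjBy]
  apply LinearMap.ext
  intro v
  simp only [Module.End.mul_apply, LinearMap.sub_apply, LinearMap.smul_apply, map_sub, map_smul,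
    eAC, eAD, eBC, eBD]
  simp only [smul_sub, smul_comm y x]
  abel

lemma cNeg_commute (i j : ℕ+) : Commute (cNeg F q i) (cNeg F q j) := by
  unfold cNeg
  exact commute_aux F (op1_commute F (aNeg_commute F i j))
    (op1_op2_commute F (aNeg F i) (aNeg F j)) (op1_op2_commute F (aNeg F j) (aNeg F i)).symm
    (op2_commute F (aNeg_commute F i j))

lemma cPos_commute (κ : ℕ+ → F) (i j : ℕ+) : Commute (cPos F q κ i) (cPos F q κ j) := by
  unfold cPos
  exact commute_aux F (op1_commute F (aPos_commute F κ i j))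
    (op1_op2_commute F (aPos F κ i) (aPos F κ j))
    (op1_op2_commute F (aPos F κ j) (aPos F κ i)).symm
    (op2_commute F (aPos_commute F κ i j))

/-- `c*_μ := (1/m(μ)!) ∏_{r∈μ} c_{-r}`. -/
def cStar (μ : Multiset ℕ+) : Module.End F (PP F ⊗[F] PP F) :=
  ((mfact μ : F))⁻¹ • opProd (cNeg F q) (cNeg_commute F q) μ

/-- `c_μ := (1/m(μ)!) ∏_{r∈μ} c_r`. -/
def cLow (κ : ℕ+ → F) (μ : Multiset ℕ+) : Module.End F (PP F ⊗[F] PP F) :=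
  ((mfact μ : F))⁻¹ • opProd (cPos F q κ) (cPos_commute F q κ) μ

/-! Each `c_{±r} = q^{-r} (a_{±r} ⊗ 1) - 1 ⊗ a_{±r}` is a sum of two commuting operators, so
`∏_{r ∈ μ} c_{±r}` expands as a sum over the submultisets `σ ≤ μ`, listed with multiplicity:
`σ` collects the parts where the second summand was chosen. A submultiset `σ` occurs in
`μ.powerset` exactly `∏_r binom(m_r(μ), m_r(σ)) = m(μ)! / (m(μ∖σ)! m(σ)!)` times, and this is
precisely the factor that turns the undivided expansion into the divided one. -/

theorem Multiset.prod_toFinset_count_of_subset {α β : Type*} [DecidableEq α] [CommMonoid β]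
    {s : Multiset α} {T : Finset α} (h : s.toFinset ⊆ T) {g : α → ℕ → β} (hg : ∀ r, g r 0 = 1) :
    ∏ r ∈ s.toFinset, g r (s.count r) = ∏ r ∈ T, g r (s.count r) :=
  Finset.prod_subset h fun r _ hr => by
    rw [Multiset.count_eq_zero.mpr (by simpa using hr), hg]

theorem Multiset.count_powerset {α : Type*} [DecidableEq α] (σ μ : Multiset α) :
    μ.powerset.count σ = ∏ r ∈ σ.toFinset, (μ.count r).choose (σ.count r) := by
  induction μ using Multiset.induction generalizing σ with
  | empty =>
    rw [Multiset.powerset_zero, Multiset.count_singleton]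
    split_ifs with hσ
    · simp [hσ]
    · obtain ⟨r, hr⟩ := Multiset.exists_mem_of_ne_zero hσ
      refine (Finset.prod_eq_zero (Multiset.mem_toFinset.mpr hr) ?_).symm
      simpa using Nat.choose_eq_zero_of_lt (Multiset.count_pos.mpr hr)
  | cons a s ih =>
    rw [Multiset.powerset_cons, Multiset.count_add]
    by_cases ha : a ∈ σ
    · obtain ⟨τ, rfl⟩ : ∃ τ, σ = a ::ₘ τ := ⟨σ.erase a, (Multiset.cons_erase ha).symm⟩
      rw [Multiset.count_map_eq_count' _ _ fun _ _ => (Multiset.cons_inj_right a).mp, ih, ih]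
      have ha' : a ∈ (a ::ₘ τ).toFinset := by simp
      have hτ : τ.toFinset ⊆ (a ::ₘ τ).toFinset := by simp +contextual
      -- off `a` the three products agree, and at `a` the identity is Pascal's rule
      rw [Multiset.prod_toFinset_count_of_subset hτ fun r => Nat.choose_zero_right _,
        ← Finset.mul_prod_erase _ _ ha', ← Finset.mul_prod_erase _ _ ha',
        ← Finset.mul_prod_erase _ _ ha']
      have hrest : ∀ t : Multiset α, ∀ r ∈ (a ::ₘ τ).toFinset.erase a,
          (t.count r).choose ((a ::ₘ τ).count r) = (t.count r).choose (τ.count r) :=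
        fun t r hr => by rw [Multiset.count_cons_of_ne (Finset.ne_of_mem_erase hr)]
      have hs : ∀ r ∈ (a ::ₘ τ).toFinset.erase a,
          ((a ::ₘ s).count r).choose (τ.count r) = (s.count r).choose (τ.count r) :=
        fun r hr => by rw [Multiset.count_cons_of_ne (Finset.ne_of_mem_erase hr)]
      rw [Finset.prod_congr rfl (hrest s), Finset.prod_congr rfl (hrest (a ::ₘ s)),
        Finset.prod_congr rfl hs]
      simp only [Multiset.count_cons_self, Nat.choose_succ_succ']
      ring
    · have hzero : (s.powerset.map (Multiset.cons a)).count σ = 0 :=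
        Multiset.count_eq_zero.mpr fun hmem => by
          obtain ⟨t, -, rfl⟩ := Multiset.mem_map.mp hmem
          exact ha (Multiset.mem_cons_self a t)
      rw [hzero, add_zero, ih]
      refine Finset.prod_congr rfl fun r hr => ?_
      rw [Multiset.count_cons_of_ne (by rintro rfl; exact ha (by simpa using hr))]

theorem mfact_eq_prod_of_subset {μ : Multiset ℕ+} {T : Finset ℕ+} (h : μ.toFinset ⊆ T) :
    mfact μ = ∏ r ∈ T, (μ.count r).factorial :=
  Multiset.prod_toFinset_count_of_subset h fun _ => Nat.factorial_zero

theorem mfact_ne_zero (μ : Multiset ℕ+) : mfact μ ≠ 0 :=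
  (mfact_eq_prod_of_subset subset_rfl).trans_ne <|
    Finset.prod_ne_zero_iff.mpr fun _ _ => Nat.factorial_ne_zero _

theorem count_powerset_mul_mfact {σ μ : Multiset ℕ+} (h : σ ≤ μ) :
    μ.powerset.count σ * (mfact (μ - σ) * mfact σ) = mfact μ := by
  have hσ : σ.toFinset ⊆ μ.toFinset := Multiset.toFinset_subset.mpr (Multiset.subset_of_le h)
  have hμσ : (μ - σ).toFinset ⊆ μ.toFinset :=
    Multiset.toFinset_subset.mpr (Multiset.subset_of_le (Multiset.sub_le_self μ σ))
  rw [Multiset.count_powerset,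
    Multiset.prod_toFinset_count_of_subset hσ fun _ => Nat.choose_zero_right _,
    mfact_eq_prod_of_subset hμσ, mfact_eq_prod_of_subset hσ, mfact_eq_prod_of_subset subset_rfl, ← Finset.prod_mul_distrib, ← Finset.prod_mul_distrib]
  refine Finset.prod_congr rfl fun r _ => ?_
  rw [Multiset.count_sub, ← Nat.choose_mul_factorial_mul_factorial (Multiset.count_le_of_le r h)]
  ring

theorem msum_cons (a : ℕ+) (μ : Multiset ℕ+) : msum (a ::ₘ μ) = a + msum μ := by
  simp [msum]

theorem msum_add (σ ν : Multiset ℕ+) : msum (σ + ν) = msum σ + msum ν := by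
  simp [msum]

theorem prod_map_pow_eq_pow_msum {M : Type*} [CommMonoid M] (x : M) (ν : Multiset ℕ+) :
    (ν.map fun r : ℕ+ => x ^ (r : ℕ)).prod = x ^ msum ν := by
  induction ν using Multiset.induction with
  | empty => simp [msum]
  | cons a s ih => rw [Multiset.map_cons, Multiset.prod_cons, ih, msum_cons, pow_add]

theorem prod_map_inv_pow_sub {K : Type*} [Field K] (q : K) {σ μ : Multiset ℕ+}
    (h : σ ≤ μ) : ((μ - σ).map fun r : ℕ+ => q⁻¹ ^ (r : ℕ)).prod = q ^ ((msum σ : ℤ) - msum μ) := by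
  obtain ⟨ν, rfl⟩ := Multiset.le_iff_exists_add.mp h
  rw [add_tsub_cancel_left, prod_map_pow_eq_pow_msum, msum_add, Nat.cast_add, sub_add_cancel_left,
    zpow_neg, zpow_natCast, inv_pow]

section opProd

variable {M : Type*} [Monoid M]

theorem opProd_cons (f : ℕ+ → M) (hf : ∀ i j, Commute (f i) (f j)) (a : ℕ+) (μ : Multiset ℕ+) :
    opProd f hf (a ::ₘ μ) = f a * opProd f hf μ := by
  simp only [opProd, Multiset.map_cons, Multiset.noncommProd_cons]

theorem Commute.opProd_right {f : ℕ+ → M} (hf : ∀ i j, Commute (f i) (f j)) {x : M}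
    (h : ∀ i, Commute x (f i)) (μ : Multiset ℕ+) : Commute x (opProd f hf μ) :=
  Multiset.noncommProd_commute _ _ _ fun y hy => by
    obtain ⟨i, -, rfl⟩ := Multiset.mem_map.mp hy
    exact h i

theorem opProd_congr {f g : ℕ+ → M} (hf : ∀ i j, Commute (f i) (f j))
    (hg : ∀ i j, Commute (g i) (g j)) (h : ∀ r, f r = g r) (μ : Multiset ℕ+) :
    opProd f hf μ = opProd g hg μ := by
  obtain rfl : f = g := funext h
  rfl

end opProd

theorem commute_add_of_commute {R : Type*} [Semiring R] {A B : ℕ+ → R}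
    (hA : ∀ i j, Commute (A i) (A j)) (hB : ∀ i j, Commute (B i) (B j))
    (hAB : ∀ i j, Commute (A i) (B j)) (i j : ℕ+) : Commute (A i + B i) (A j + B j) :=
  ((hA i j).add_right (hAB i j)).add_left ((hAB j i).symm.add_right (hB i j))

theorem opProd_add {R : Type*} [Semiring R] {A B : ℕ+ → R}
    (hA : ∀ i j, Commute (A i) (A j)) (hB : ∀ i j, Commute (B i) (B j))
    (hAB : ∀ i j, Commute (A i) (B j)) (μ : Multiset ℕ+) :
    opProd (fun r => A r + B r) (commute_add_of_commute hA hB hAB) μ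
      = (μ.powerset.map fun σ => opProd A hA (μ - σ) * opProd B hB σ).sum := by
  induction μ using Multiset.induction with
  | empty => simp [opProd]
  | cons a s ih =>
    rw [opProd_cons, ih, Multiset.powerset_cons, Multiset.map_add, Multiset.sum_add,
      Multiset.map_map, add_mul, ← Multiset.sum_map_mul_left, ← Multiset.sum_map_mul_left]
    congr 1
    · refine congrArg Multiset.sum (Multiset.map_congr rfl fun σ hσ => ?_)
      rw [Multiset.cons_sub_of_le a (Multiset.mem_powerset.mp hσ), opProd_cons, mul_assoc]
    · refine congrArg Multiset.sum (Multiset.map_congr rfl fun σ _ => ?_)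
      rw [Function.comp_apply, Multiset.sub_cons, Multiset.erase_cons_head, opProd_cons,
        ← mul_assoc, ((Commute.opProd_right hA fun i => (hAB i a).symm) (s - σ)).eq, mul_assoc]

theorem opProd_smul {K R : Type*} [CommMonoid K] [Monoid R] [MulAction K R]
    [IsScalarTower K R R] [SMulCommClass K R R] (c : ℕ+ → K)
    {f : ℕ+ → R} (hf : ∀ i j, Commute (f i) (f j)) (μ : Multiset ℕ+) :
    opProd (fun r => c r • f r) (fun i j => ((hf i j).smul_left _).smul_right _) μ
      = (μ.map c).prod • opProd f hf μ := by
  induction μ using Multiset.induction with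
  | empty => simp [opProd]
  | cons a s ih =>
    rw [opProd_cons, ih, opProd_cons, Multiset.map_cons, Multiset.prod_cons, smul_mul_smul_comm]

theorem map_opProd {M N G : Type*} [Monoid M] [Monoid N] [FunLike G M N] [MonoidHomClass G M N]
    (φ : G) {f : ℕ+ → M} (hf : ∀ i j, Commute (f i) (f j)) (μ : Multiset ℕ+) :
    φ (opProd f hf μ) = opProd (fun r => φ (f r)) (fun i j => (hf i j).map φ) μ := by
  induction μ using Multiset.induction with
  | empty => exact map_one φ
  | cons a s ih => rw [opProd_cons, map_mul, ih, opProd_cons]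

theorem divided_opProd_add {K R : Type*} [Field K] [CharZero K] [Semiring R] [Module K R]
    [IsScalarTower K R R] [SMulCommClass K R R]
    {A B : ℕ+ → R} (hA : ∀ i j, Commute (A i) (A j)) (hB : ∀ i j, Commute (B i) (B j))
    (hAB : ∀ i j, Commute (A i) (B j)) (μ : Multiset ℕ+) :
    (mfact μ : K)⁻¹ • opProd (fun r => A r + B r) (commute_add_of_commute hA hB hAB) μ
      = ∑ σ ∈ μ.powerset.toFinset,
          ((mfact (μ - σ) : K)⁻¹ • opProd A hA (μ - σ)) * ((mfact σ : K)⁻¹ • opProd B hB σ) := by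
  rw [opProd_add hA hB hAB, Finset.sum_multiset_map_count, Finset.smul_sum]
  refine Finset.sum_congr rfl fun σ hσ => ?_
  have hcount := count_powerset_mul_mfact (Multiset.mem_powerset.mp (Multiset.mem_toFinset.mp hσ))
  have hμ₀ : (mfact μ : K) ≠ 0 := Nat.cast_ne_zero.mpr (mfact_ne_zero μ)
  have hμσ₀ : (mfact (μ - σ) : K) ≠ 0 := Nat.cast_ne_zero.mpr (mfact_ne_zero _)
  have hσ₀ : (mfact σ : K) ≠ 0 := Nat.cast_ne_zero.mpr (mfact_ne_zero σ)
  rw [smul_mul_smul_comm, ← Nat.cast_smul_eq_nsmul K, smul_smul]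
  congr 1
  field_simp
  rw [← mul_assoc] at hcount
  exact_mod_cast hcount

theorem op1_mul_op2 {K : Type*} [Field K] (X Y : Module.End K (PP K)) :
    op1 K X * op2 K Y = TensorProduct.map X Y := by
  rw [op1, op2, ← TensorProduct.map_mul]
  rfl

theorem op1_opProd {f : ℕ+ → Module.End F (PP F)} (hf : ∀ i j, Commute (f i) (f j))
    (μ : Multiset ℕ+) :
    op1 F (opProd f hf μ) = opProd (fun r => op1 F (f r)) (fun i j => op1_commute F (hf i j)) μ :=
  map_opProd (Module.End.rTensorAlgHom F (PP F) (PP F)) hf μ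

theorem op2_opProd {f : ℕ+ → Module.End F (PP F)} (hf : ∀ i j, Commute (f i) (f j))
    (μ : Multiset ℕ+) :
    op2 F (opProd f hf μ) = opProd (fun r => op2 F (f r)) (fun i j => op2_commute F (hf i j)) μ :=
  map_opProd (Module.End.lTensorAlgHom F (PP F) (PP F)) hf μ

theorem smul_op1_sub_op2_commute (c : ℕ+ → F) {f : ℕ+ → Module.End F (PP F)}
    (hf : ∀ i j, Commute (f i) (f j)) (i j : ℕ+) :
    Commute (c i • op1 F (f i) - op2 F (f i)) (c j • op1 F (f j) - op2 F (f j)) :=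
  commute_aux F (op1_commute F (hf i j)) (op1_op2_commute F _ _) (op1_op2_commute F _ _).symm
    (op2_commute F (hf i j))

theorem divided_opProd_smul_op1_sub_op2 (f : ℕ+ → Module.End F (PP F))
    (hf : ∀ i j, Commute (f i) (f j)) (μ : Multiset ℕ+) :
    (mfact μ : F)⁻¹ • opProd (fun r => q⁻¹ ^ (r : ℕ) • op1 F (f r) - op2 F (f r))
        (smul_op1_sub_op2_commute F _ hf) μ
      = ∑ σ ∈ μ.powerset.toFinset,
          ((-1 : F) ^ Multiset.card σ * q ^ ((msum σ : ℤ) - msum μ)) •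
            TensorProduct.map ((mfact (μ - σ) : F)⁻¹ • opProd f hf (μ - σ))
              ((mfact σ : F)⁻¹ • opProd f hf σ) := by
  have h1 : ∀ i j, Commute (op1 F (f i)) (op1 F (f j)) := fun i j => op1_commute F (hf i j)
  have h2 : ∀ i j, Commute (op2 F (f i)) (op2 F (f j)) := fun i j => op2_commute F (hf i j)
  have hA : ∀ i j : ℕ+, Commute (q⁻¹ ^ (i : ℕ) • op1 F (f i)) (q⁻¹ ^ (j : ℕ) • op1 F (f j)) :=
    fun i j => ((h1 i j).smul_left _).smul_right _
  have hB : ∀ i j, Commute ((-1 : F) • op2 F (f i)) ((-1 : F) • op2 F (f j)) :=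
    fun i j => ((h2 i j).smul_left _).smul_right _
  have hAB : ∀ i j : ℕ+, Commute (q⁻¹ ^ (i : ℕ) • op1 F (f i)) ((-1 : F) • op2 F (f j)) :=
    fun i j => ((op1_op2_commute F (f i) (f j)).smul_left _).smul_right _
  rw [opProd_congr _ (commute_add_of_commute hA hB hAB) (fun r => by module),
    divided_opProd_add hA hB hAB μ]
  refine Finset.sum_congr rfl fun σ hσ => ?_
  have hσμ : σ ≤ μ := Multiset.mem_powerset.mp (Multiset.mem_toFinset.mp hσ)
  rw [opProd_smul _ h1, opProd_smul _ h2, ← op1_opProd F hf, ← op2_opProd F hf,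
    prod_map_inv_pow_sub q hσμ, Multiset.map_const', Multiset.prod_replicate,
    TensorProduct.map_smul_left, TensorProduct.map_smul_right, smul_mul_smul_comm,
    smul_mul_smul_comm, op1_mul_op2]
  simp only [smul_smul]
  congr 1
  ring

theorem statement5_general (F : Type*) [Field F] [CharZero F] (q : F)
    (κ : ℕ+ → F) (μ : Multiset ℕ+) :
    (cStar F q μ =
      ∑ σ ∈ μ.powerset.toFinset,
        (((-1 : F) ^ (Multiset.card σ)) * q ^ ((msum σ : ℤ) - (msum μ : ℤ))) •
          (TensorProduct.map (aStar F (μ - σ)) (aStar F σ) :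
            Module.End F (PP F ⊗[F] PP F))) ∧
    (cLow F q κ μ =
      ∑ σ ∈ μ.powerset.toFinset,
        (((-1 : F) ^ (Multiset.card σ)) * q ^ ((msum σ : ℤ) - (msum μ : ℤ))) •
          (TensorProduct.map (aLow F κ (μ - σ)) (aLow F κ σ) :
            Module.End F (PP F ⊗[F] PP F))) :=
  ⟨divided_opProd_smul_op1_sub_op2 F q (aNeg F) (aNeg_commute F) μ,
    divided_opProd_smul_op1_sub_op2 F q (aPos F κ) (aPos_commute F κ) μ⟩

/-- expansion of the divided-power `c`-monomials, used in the proof of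
Proposition 4.3: `c*_μ = ∑_{σ ⊆ μ} (−1)^{ℓ(σ)} q^{−|μ|+|σ|} · a*_{μ∖σ} ⊗ a*_σ` and
`c_μ = ∑_{σ ⊆ μ} (−1)^{ℓ(σ)} q^{−|μ|+|σ|} · a_{μ∖σ} ⊗ a_σ`, the sums running over all
submultisets `σ` of `μ`. -/
theorem statement5 (F : Type*) [Field F] [CharZero F] (q : F) (hq : q ≠ 0)
    (κ : ℕ+ → F) (μ : Multiset ℕ+) :
    (cStar F q μ =
      ∑ σ ∈ μ.powerset.toFinset,
        (((-1 : F) ^ (Multiset.card σ)) * q ^ ((msum σ : ℤ) - (msum μ : ℤ))) •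
          (TensorProduct.map (aStar F (μ - σ)) (aStar F σ) :
            Module.End F (PP F ⊗[F] PP F))) ∧
    (cLow F q κ μ =
      ∑ σ ∈ μ.powerset.toFinset,
        (((-1 : F) ^ (Multiset.card σ)) * q ^ ((msum σ : ℤ) - (msum μ : ℤ))) •
          (TensorProduct.map (aLow F κ (μ - σ)) (aLow F κ σ) :
            Module.End F (PP F ⊗[F] PP F))) :=
  statement5_general F q κ μ
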